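/- Let F be a finite set of collinear circles in the plane. Then the join-irreducible elements of the lattice of closed sets of (F,ch) are exactly the sets [A,A] = {C ∈ F : C ⊆ conv(A)} for A ∈ F. -/

import Mathlib

/-- A collinear circle: a circle in the plane whose center `(u,0)` lies on the x-axis,
with radius `r ≥ 0`. -/
structure CC where
  u : ℝ
  r : ℝ
  hr : 0 ≤ r

/-- The point set of a collinear circle. -/
def CC.pts (C : CC) : Set (ℝ × ℝ) := {p : ℝ × ℝ | (p.1 - C.u) ^ 2 + p.2 ^ 2 = C.r ^ 2}

/-- Leftmost point (x-coordinate). -/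
def CC.lmpt (C : CC) : ℝ := C.u - C.r

/-- Rightmost point (x-coordinate). -/
def CC.rmpt (C : CC) : ℝ := C.u + C.r

/-- `lend C ⊑ lend D` for the lexicographic order on left ends `(ℓ(C), -r(C))`. -/
def lendLe (C D : CC) : Prop := C.lmpt < D.lmpt ∨ (C.lmpt = D.lmpt ∧ D.r ≤ C.r)

/-- `rend C ⊑ rend D` for the lexicographic order on right ends `(ρ(C), r(C))`. -/
def rendLe (C D : CC) : Prop := C.rmpt < D.rmpt ∨ (C.rmpt = D.rmpt ∧ C.r ≤ D.r)

/-- The closure operator: `ch F X = {C ∈ F : C ⊆ conv(⋃_{D ∈ X} D)}`. -/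
def ch (F X : Set CC) : Set CC :=
  {C | C ∈ F ∧ C.pts ⊆ convexHull ℝ (⋃ D ∈ X, CC.pts D)}

/-- The horizontal interval `[A,B] = {C ∈ F : lend A ⊑ lend C, rend C ⊑ rend B}`. -/
def hInt (F : Set CC) (A B : CC) : Set CC :=
  {C | C ∈ F ∧ lendLe A C ∧ rendLe C B}

/-- `F` is a concave set of collinear circles. -/
def ConcaveF (F : Set CC) : Prop :=
  ∀ C₁ ∈ F, ∀ C₂ ∈ F, ∀ C₃ ∈ F, lendLe C₁ C₂ → rendLe C₂ C₃ →
    C₂.pts ⊆ convexHull ℝ (C₁.pts ∪ C₃.pts)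


/-!
The closed sets of `(F, ch)` form a finite closure system in which every closed set `X` is the
join of the sets `ch {A}`, `A ∈ X`; hence a join-irreducible closed set is one of them.
Conversely, suppose `ch {A} = ch (Y ∪ Z)`. Every circle of `Y ∪ Z` lies in the disk bounded by
`A`, whose boundary points are extreme, so each point of `A` lies on a circle of `Y ∪ Z`. A circle
of positive radius is infinite, while two circles with different point sets meet in at most two
points; hence one circle `D ∈ Y ∪ Z` contains all of `A`, and `ch {A}` equals `Y` or `Z`.
-/

open Set

namespace CC

def disk (C : CC) : Set (ℝ × ℝ) := {p : ℝ × ℝ | (p.1 - C.u) ^ 2 + p.2 ^ 2 ≤ C.r ^ 2}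

lemma pts_nonempty (C : CC) : C.pts.Nonempty := ⟨(C.u + C.r, 0), by simp [CC.pts]⟩

lemma pts_subset_disk (C : CC) : C.pts ⊆ C.disk := fun _ hp => le_of_eq hp

lemma convex_disk (C : CC) : Convex ℝ C.disk := by
  rintro ⟨a, b⟩ h₁ ⟨c, d⟩ h₂ s t hs ht hst
  simp only [disk, mem_ofPred_eq, Prod.smul_mk, Prod.mk_add_mk, smul_eq_mul] at *
  obtain rfl : t = 1 - s := by linarith
  nlinarith [mul_nonneg (mul_nonneg hs ht) (sq_nonneg (a - c)),
    mul_nonneg (mul_nonneg hs ht) (sq_nonneg (b - d)),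
    mul_le_mul_of_nonneg_left h₁ hs, mul_le_mul_of_nonneg_left h₂ ht]

lemma convexHull_pts_subset_disk (C : CC) : convexHull ℝ C.pts ⊆ C.disk :=
  convexHull_min C.pts_subset_disk C.convex_disk

lemma pts_subset_extremePoints_disk (C : CC) : C.pts ⊆ C.disk.extremePoints ℝ := by
  rintro ⟨x, y⟩ hp
  refine ⟨le_of_eq hp, ?_⟩
  rintro ⟨a, b⟩ h₁ ⟨c, d⟩ h₂ ⟨s, t, hs, ht, hst, hpt⟩
  simp only [pts, disk, mem_ofPred_eq, Prod.smul_mk, Prod.mk_add_mk, smul_eq_mul,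
    Prod.mk.injEq] at hp h₁ h₂ hpt ⊢
  obtain ⟨rfl, rfl⟩ := hpt
  obtain rfl : t = 1 - s := by linarith
  -- strict convexity of the squared distance to the centre: the defect is `s (1 - s) |a - c|²`
  have hpos : 0 < s * (1 - s) := mul_pos hs ht
  have hdist : s * (1 - s) * ((a - c) ^ 2 + (b - d) ^ 2) ≤ 0 := by
    nlinarith [mul_le_mul_of_nonneg_left h₁ hs.le, mul_le_mul_of_nonneg_left h₂ ht.le]
  have hsum : (a - c) ^ 2 + (b - d) ^ 2 ≤ 0 := nonpos_of_mul_nonpos_right hdist hpos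
  have hac : a = c := by nlinarith [sq_nonneg (a - c), sq_nonneg (b - d)]
  have hbd : b = d := by nlinarith [sq_nonneg (a - c), sq_nonneg (b - d)]
  subst hac hbd
  constructor <;> ring

lemma mem_of_mem_pts_of_mem_convexHull (C : CC) {S : Set (ℝ × ℝ)} (hS : S ⊆ C.disk)
    {p : ℝ × ℝ} (hp : p ∈ C.pts) (hpS : p ∈ convexHull ℝ S) : p ∈ S :=
  extremePoints_convexHull_subset <| inter_extremePoints_subset_extremePoints_of_subset
    (convexHull_min hS C.convex_disk) ⟨hpS, C.pts_subset_extremePoints_disk hp⟩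

lemma pts_eq_singleton_of_r_eq_zero (C : CC) (h : C.r = 0) : C.pts = {(C.u, 0)} := by
  ext ⟨x, y⟩
  simp only [pts, mem_ofPred_eq, h, mem_singleton_iff, Prod.mk.injEq]
  constructor
  · intro hxy; constructor <;> nlinarith [sq_nonneg (x - C.u), sq_nonneg y]
  · rintro ⟨rfl, rfl⟩; ring

lemma pts_infinite (C : CC) (h : 0 < C.r) : C.pts.Infinite := by
  refine Infinite.of_image Prod.fst ((Icc_infinite (by linarith : C.u - C.r < C.u + C.r)).mono ?_)
  rintro x ⟨hx₁, hx₂⟩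
  have hx : (x - C.u) ^ 2 ≤ C.r ^ 2 := by nlinarith
  refine ⟨(x, √(C.r ^ 2 - (x - C.u) ^ 2)), ?_, rfl⟩
  simp only [pts, mem_ofPred_eq, Real.sq_sqrt (sub_nonneg.mpr hx)]
  ring

lemma pts_inter_finite {C D : CC} (h : ¬C.pts ⊆ D.pts) : (C.pts ∩ D.pts).Finite := by
  by_cases hu : D.u = C.u
  · convert finite_empty
    refine eq_empty_of_forall_notMem fun p ⟨hpC, hpD⟩ => h fun q hq => ?_
    simp only [pts, mem_ofPred_eq, hu] at hpC hpD hq ⊢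
    linarith
  · have hdu : D.u - C.u ≠ 0 := sub_ne_zero.mpr hu
    -- subtracting the two equations leaves the radical axis, a vertical line `x = x₀`
    set x₀ := (C.r ^ 2 - D.r ^ 2 + D.u ^ 2 - C.u ^ 2) / (2 * (D.u - C.u)) with hx₀
    set y₀ := √(C.r ^ 2 - (x₀ - C.u) ^ 2)
    refine (toFinite {(x₀, y₀), (x₀, -y₀)}).subset ?_
    rintro ⟨x, y⟩ ⟨hpC, hpD⟩
    simp only [pts, mem_ofPred_eq] at hpC hpD
    obtain rfl : x = x₀ := by
      rw [hx₀, eq_div_iff (mul_ne_zero two_ne_zero hdu)]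
      linear_combination hpC - hpD
    have hy : |y| = y₀ := by rw [← Real.sqrt_sq_eq_abs]; congr 1; linarith
    rcases abs_eq (Real.sqrt_nonneg _) |>.mp hy with rfl | rfl <;> simp [y₀]

lemma exists_pts_subset_of_pts_subset_biUnion (C : CC) {W : Set CC} (hW : W.Finite)
    (hC : C.pts ⊆ ⋃ D ∈ W, D.pts) : ∃ D ∈ W, C.pts ⊆ D.pts := by
  rcases C.hr.eq_or_lt with h₀ | h₀
  · have hCpt := C.pts_eq_singleton_of_r_eq_zero h₀.symm
    obtain ⟨D, hD, hpD⟩ := mem_iUnion₂.mp (hC (hCpt ▸ mem_singleton _))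
    exact ⟨D, hD, hCpt ▸ singleton_subset_iff.mpr hpD⟩
  · by_contra! hne
    refine C.pts_infinite h₀ ((hW.biUnion fun D hD => pts_inter_finite (hne D hD)).subset ?_)
    intro p hp
    obtain ⟨D, hD, hpD⟩ := mem_iUnion₂.mp (hC hp)
    exact mem_iUnion₂.mpr ⟨D, hD, hp, hpD⟩

lemma exists_pts_subset_of_pts_subset_convexHull (C : CC) {W : Set CC} (hW : W.Finite)
    (hWC : ∀ D ∈ W, D.pts ⊆ convexHull ℝ C.pts) (hC : C.pts ⊆ convexHull ℝ (⋃ D ∈ W, D.pts)) :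
    ∃ D ∈ W, C.pts ⊆ D.pts := by
  have hWdisk : (⋃ D ∈ W, D.pts) ⊆ C.disk :=
    iUnion₂_subset fun D hD => (hWC D hD).trans C.convexHull_pts_subset_disk
  exact C.exists_pts_subset_of_pts_subset_biUnion hW
    fun p hp => C.mem_of_mem_pts_of_mem_convexHull hWdisk hp (hC hp)

end CC

section Closure

variable {F X Y Z : Set CC}

lemma ch_subset (F X : Set CC) : ch F X ⊆ F := fun _ h => h.1

lemma ch_mono (h : X ⊆ Y) : ch F X ⊆ ch F Y :=
  fun _ hC => ⟨hC.1, hC.2.trans (convexHull_mono (biUnion_subset_biUnion_left h))⟩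

lemma subset_ch (h : X ⊆ F) : X ⊆ ch F X :=
  fun _ hC => ⟨h hC, fun _ hp => subset_convexHull ℝ _ (mem_biUnion hC hp)⟩

lemma ch_subset_ch_of_subset_ch (h : X ⊆ ch F Y) : ch F X ⊆ ch F Y := by
  have hX : (⋃ D ∈ X, D.pts) ⊆ convexHull ℝ (⋃ D ∈ Y, D.pts) :=
    iUnion₂_subset fun D hD => (h hD).2
  exact fun C hC => ⟨hC.1, hC.2.trans (convexHull_min hX (convex_convexHull ℝ _))⟩

lemma ch_ch (F X : Set CC) : ch F (ch F X) = ch F X :=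
  (ch_subset_ch_of_subset_ch subset_rfl).antisymm (subset_ch (ch_subset F X))

lemma ch_union_ch (hY : Y ⊆ F) (hZ : Z ⊆ F) : ch F (ch F Y ∪ ch F Z) = ch F (Y ∪ Z) :=
  (ch_subset_ch_of_subset_ch (union_subset (ch_mono subset_union_left)
    (ch_mono subset_union_right))).antisymm (ch_mono (union_subset_union (subset_ch hY)
    (subset_ch hZ)))

lemma ch_empty (F : Set CC) : ch F ∅ = ∅ :=
  eq_empty_of_forall_notMem fun C hC => by
    obtain ⟨p, hp⟩ := C.pts_nonempty
    simpa using hC.2 hp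

lemma ch_singleton (F : Set CC) (A : CC) :
    ch F {A} = {C : CC | C ∈ F ∧ C.pts ⊆ convexHull ℝ A.pts} := by
  simp only [ch, biUnion_singleton]

lemma mem_ch_of_pts_subset {A D : CC} (hA : A ∈ F) (hD : D ∈ X) (h : A.pts ⊆ D.pts) :
    A ∈ ch F X :=
  ⟨hA, h.trans ((subset_biUnion_of_mem hD).trans (subset_convexHull ℝ _))⟩

end Closure

def IsJoinIrreducibleClosed (F X : Set CC) : Prop :=
  X ⊆ F ∧ ch F X = X ∧ X ≠ ∅ ∧
    ∀ Y Z : Set CC, Y ⊆ F → ch F Y = Y → Z ⊆ F → ch F Z = Z →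
      X = ch F (Y ∪ Z) → X = Y ∨ X = Z

namespace IsJoinIrreducibleClosed

variable {F X : Set CC}

lemma exists_eq_ch_singleton_of_eq_ch (hX : IsJoinIrreducibleClosed F X) {T : Set CC}
    (hT : T.Finite) (hTF : T ⊆ F) (hXT : X = ch F T) : ∃ A ∈ T, X = ch F {A} := by
  obtain ⟨-, -, hne, hirr⟩ := hX
  induction T, hT using Finite.induction_on with
  | empty => exact absurd (hXT.trans (ch_empty F)) hne
  | @insert a T _ _ ih =>
    have haF : {a} ⊆ F := singleton_subset_iff.mpr (hTF (mem_insert a T))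
    have hTF' : T ⊆ F := (subset_insert a T).trans hTF
    have hjoin : X = ch F (ch F {a} ∪ ch F T) := by
      rw [ch_union_ch haF hTF', hXT, insert_eq]
    rcases hirr _ _ (ch_subset F _) (ch_ch F _) (ch_subset F _) (ch_ch F _) hjoin with h | h
    · exact ⟨a, mem_insert a T, h⟩
    · obtain ⟨A, hA, hXA⟩ := ih hTF' h
      exact ⟨A, mem_insert_of_mem a hA, hXA⟩

lemma exists_eq_ch_singleton (hX : IsJoinIrreducibleClosed F X) (hXfin : X.Finite) :
    ∃ A ∈ X, X = ch F {A} :=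
  hX.exists_eq_ch_singleton_of_eq_ch hXfin hX.1 hX.2.1.symm

end IsJoinIrreducibleClosed

lemma ch_singleton_eq_of_mem {F Y : Set CC} {A : CC} (hY : ch F Y = Y) (hYA : Y ⊆ ch F {A})
    (hA : A ∈ Y) : ch F {A} = Y :=
  (hY ▸ ch_mono (singleton_subset_iff.mpr hA)).antisymm hYA

lemma isJoinIrreducibleClosed_ch_singleton {F : Set CC} (hF : F.Finite) {A : CC} (hA : A ∈ F) :
    IsJoinIrreducibleClosed F (ch F {A}) := by
  have hAA : A ∈ ch F {A} := subset_ch (singleton_subset_iff.mpr hA) rfl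
  refine ⟨ch_subset F _, ch_ch F _, nonempty_iff_ne_empty.mp ⟨A, hAA⟩, ?_⟩
  intro Y Z hYF hYcl hZF hZcl hXYZ
  have hYZA : Y ∪ Z ⊆ ch F {A} := hXYZ ▸ subset_ch (union_subset hYF hZF)
  have hWA : ∀ D ∈ Y ∪ Z, D.pts ⊆ convexHull ℝ A.pts := fun D hD =>
    (ch_singleton F A ▸ hYZA hD).2
  obtain ⟨D, hD, hAD⟩ := A.exists_pts_subset_of_pts_subset_convexHull
    (hF.subset (union_subset hYF hZF)) hWA (hXYZ ▸ hAA).2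
  rcases hD with hD | hD
  · exact Or.inl <| ch_singleton_eq_of_mem hYcl (subset_union_left.trans hYZA)
      (hYcl ▸ mem_ch_of_pts_subset hA hD hAD)
  · exact Or.inr <| ch_singleton_eq_of_mem hZcl (subset_union_right.trans hYZA)
      (hZcl ▸ mem_ch_of_pts_subset hA hD hAD)

/-- For a finite set `F` of collinear circles, the join-irreducible
elements of the lattice of closed sets of `(F, ch)` (the nonbottom closed sets `X`
such that `X = Y ⊔ Z` for closed `Y, Z` forces `X = Y` or `X = Z`; the join of
closed sets being the closure of the union) are exactly the sets
`[A,A] = {C ∈ F : C ⊆ conv(A)}` for `A ∈ F`. -/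
theorem stmt6 (F : Set CC) (hF : F.Finite) :
    {X : Set CC | X ⊆ F ∧ ch F X = X ∧ X ≠ ∅ ∧
      ∀ Y Z : Set CC, Y ⊆ F → ch F Y = Y → Z ⊆ F → ch F Z = Z →
        X = ch F (Y ∪ Z) → X = Y ∨ X = Z} =
    {S : Set CC | ∃ A ∈ F, S = {C : CC | C ∈ F ∧ C.pts ⊆ convexHull ℝ A.pts}} := by
  ext X
  constructor
  · intro (hX : IsJoinIrreducibleClosed F X)
    obtain ⟨A, hAX, hXA⟩ := IsJoinIrreducibleClosed.exists_eq_ch_singleton hX (hF.subset hX.1)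
    exact ⟨A, hX.1 hAX, hXA.trans (ch_singleton F A)⟩
  · rintro ⟨A, hA, rfl⟩
    rw [← ch_singleton]
    exact isJoinIrreducibleClosed_ch_singleton hF hA
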